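/- arXiv:2508.18602 — 5 statements merged into one kernel-verified Lean document; each statement's English description precedes it below -/
import Mathlib

section
/- Let P be a finite poset with unique minimum 0̂, V a finite-dimensional vector space, and {V_x : x ∈ P} a P-filtration of V (i.e., V_x ⊆ V for each x, V_y ⊆ V_x whenever x ≤ y, and V_{0̂} = V). Define V_{>x} = Σ_{y > x} V_y and V_{=x} = V_x / V_{>x}. Then dim V ≤ Σ_{x ∈ P} dim V_{=x}. -/
/-! Peel off a minimal element `x` of an upper set `s ⊆ P`. Since `s \ {x}` is again an upper set
containing every `y > x`, the subspace `U = Σ_{y ∈ s \ {x}} V_y` contains `V_{>x}`, so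
`dim (V_x + U) = dim V_x + dim U - dim (V_x ∩ U) ≤ dim V_{=x} + dim U`. Induction over `s` ends at
`s = P`, where `Σ_{y ∈ P} V_y ⊇ V_{0̂} = V`. -/

open Module

theorem Submodule.finrank_sup_le_finrank_quotient_add {K V : Type*} [DivisionRing K]
    [AddCommGroup V] [Module K V] [FiniteDimensional K V] {A B W : Submodule K V} (hWB : W ≤ B) :
    finrank K ↥(A ⊔ B) ≤ finrank K (A ⧸ W.comap A.subtype) + finrank K B := by
  have hquot := Submodule.finrank_quotient_add_finrank (W.comap A.subtype)
  have hinf : finrank K (W.comap A.subtype) ≤ finrank K ↥(A ⊓ B) :=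
    calc finrank K (W.comap A.subtype)
        ≤ finrank K (B.comap A.subtype) := Submodule.finrank_mono (Submodule.comap_mono hWB)
      _ = finrank K ↥(A ⊓ B) := by
        rw [← Submodule.finrank_map_subtype_eq, Submodule.map_comap_subtype]
  have hmodular := Submodule.finrank_sup_add_finrank_inf_eq A B
  omega

theorem finrank_finsetSup_le_sum_of_isUpperSet {K V P : Type*} [DivisionRing K]
    [AddCommGroup V] [Module K V] [FiniteDimensional K V] [PartialOrder P]
    (filt : P → Submodule K V) (s : Finset P) (hs : IsUpperSet (s : Set P)) :
    finrank K ↥(s.sup filt) ≤ ∑ x ∈ s, finrank K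
      ((filt x) ⧸ (Submodule.comap (filt x).subtype (⨆ y ∈ {y : P | x < y}, filt y))) := by
  classical
  induction s using Finset.strongInduction with
  | H s ih =>
    rcases s.eq_empty_or_nonempty with rfl | hne
    · simp
    obtain ⟨x, hxs, hmin⟩ := s.exists_minimal hne
    have hs' : IsUpperSet (s.erase x : Set P) := by
      rw [Finset.coe_erase]
      exact hs.erase fun b hb hbx => hbx.antisymm (hmin hb hbx)
    have hgt : (⨆ y ∈ {y : P | x < y}, filt y) ≤ (s.erase x).sup filt :=
      iSup₂_le fun y hxy =>
        Finset.le_sup (Finset.mem_erase.mpr ⟨hxy.ne', hs hxy.le hxs⟩)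
    calc finrank K ↥(s.sup filt)
        = finrank K ↥(filt x ⊔ (s.erase x).sup filt) := by
          rw [← Finset.sup_insert, Finset.insert_erase hxs]
      _ ≤ _ + finrank K ↥((s.erase x).sup filt) :=
          Submodule.finrank_sup_le_finrank_quotient_add hgt
      _ ≤ _ := by
          rw [← Finset.add_sum_erase s _ hxs]
          exact Nat.add_le_add_left (ih _ (Finset.erase_ssubset hxs) hs') _

theorem P_filtration_dim_bound_general {F V P : Type*} [Field F] [AddCommGroup V]
    [Module F V] [FiniteDimensional F V] [Fintype P] [PartialOrder P] [OrderBot P]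
    (filt : P → Submodule F V)
    (hbot : filt ⊥ = ⊤) :
    Module.finrank F V ≤ ∑ x : P, Module.finrank F
      ((filt x) ⧸ (Submodule.comap (filt x).subtype (⨆ y ∈ {y : P | x < y}, filt y))) := by
  have hsup : Finset.univ.sup filt = ⊤ :=
    top_le_iff.mp (hbot ▸ Finset.le_sup (Finset.mem_univ ⊥))
  have h := finrank_finsetSup_le_sum_of_isUpperSet filt Finset.univ (by simpa using isUpperSet_univ)
  rwa [hsup, finrank_top] at h

/-- if `{V_x : x ∈ P}` is a `P`-filtration of a finite-dimensional
vector space `V` (so `V_y ⊆ V_x` for `x ≤ y` and `V_{0̂} = V`), then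
`dim V ≤ Σ_{x ∈ P} dim (V_x / Σ_{y > x} V_y)`. -/
theorem P_filtration_dim_bound {F V P : Type*} [Field F] [AddCommGroup V]
    [Module F V] [FiniteDimensional F V] [Fintype P] [PartialOrder P] [OrderBot P]
    (filt : P → Submodule F V)
    (hanti : ∀ x y : P, x ≤ y → filt y ≤ filt x)
    (hbot : filt ⊥ = ⊤) :
    Module.finrank F V ≤ ∑ x : P, Module.finrank F
      ((filt x) ⧸ (Submodule.comap (filt x).subtype (⨆ y ∈ {y : P | x < y}, filt y))) :=
  P_filtration_dim_bound_general filt hbot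
end

section
/- Let P be a finite poset with unique minimum, G a finite group acting on P by order-preserving automorphisms and acting linearly on a finite-dimensional F-vector space V with #G invertible in F. Suppose {V_x : x ∈ P} is a G-equivariant P-filtration (g·V_x = V_{g·x}) with dim V = Σ_{x∈P} dim V_{=x}. Then V is isomorphic as a G-module to the direct sum over orbit representatives x of the induced modules Ind_{G_x}^G(V_{=x}), where G_x is the stabilizer of x. -/
/-!
Averaging arbitrary projections `V → V_{>x}` over `G` (possible since `#G ∈ Fˣ`) yields
projections `Q x` onto `V_{>x}` with `Q (g • x) ∘ ρ g = ρ g ∘ Q x`. Hence the subspaces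
`W x = V_x ∩ ker (Q x)` form a `G`-stable family of complements of `V_{>x}` in `V_x`, and
`W x ≅ V_{=x}`. Descending induction on the finite poset shows that the `W y` span every `V_x`,
in particular `V = V_{0̂}`; by the dimension hypothesis `Π x, W x → V`, `w ↦ Σ w x`, is then an
isomorphism, and it intertwines `ρ` with the action of `G` permuting the components.
-/

/-- For a `P`-filtration `filt`, the subspace `V_{>x} = Σ_{y > x} V_y`. -/
def filtGT {F V P : Type*} [Field F] [AddCommGroup V] [Module F V] [PartialOrder P]
    (filt : P → Submodule F V) (x : P) : Submodule F V :=
  ⨆ y ∈ {y : P | x < y}, filt y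

/-- The subquotient `V_{=x} = V_x / V_{>x}` of a `P`-filtration. -/
abbrev filtEq {F V P : Type*} [Field F] [AddCommGroup V] [Module F V] [PartialOrder P]
    (filt : P → Submodule F V) (x : P) :=
  (filt x) ⧸ (Submodule.comap (filt x).subtype (filtGT filt x))

open Submodule

section Averaging

variable {F V X G : Type*} [Field F] [AddCommGroup V] [Module F V] [Group G] [MulAction G X]
  (ρ : Representation F G V)

def EquivariantFamily (U : X → Submodule F V) : Prop :=
  ∀ (g : G) (x : X), U x ≤ (U (g • x)).comap (ρ g)

variable [Fintype G]

noncomputable def averagedFamily (q : X → V →ₗ[F] V) (x : X) : V →ₗ[F] V :=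
  (Fintype.card G : F)⁻¹ • ∑ g : G, ρ g ∘ₗ q (g⁻¹ • x) ∘ₗ ρ g⁻¹

variable {ρ} {q : X → V →ₗ[F] V}

lemma averagedFamily_apply (x : X) (v : V) :
    averagedFamily ρ q x v = (Fintype.card G : F)⁻¹ • ∑ g : G, ρ g (q (g⁻¹ • x) (ρ g⁻¹ v)) := by
  simp [averagedFamily, LinearMap.sum_apply]

lemma averagedFamily_mem {U : X → Submodule F V} (hU : EquivariantFamily ρ U)
    (hq : ∀ x v, q x v ∈ U x) (x : X) (v : V) : averagedFamily ρ q x v ∈ U x := by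
  rw [averagedFamily_apply]
  refine smul_mem _ _ (sum_mem fun g _ => ?_)
  simpa using hU g _ (hq (g⁻¹ • x) (ρ g⁻¹ v))

lemma averagedFamily_apply_of_mem (hG : (Fintype.card G : F) ≠ 0) {U : X → Submodule F V}
    (hU : EquivariantFamily ρ U) (hq : ∀ x, ∀ v ∈ U x, q x v = v) {x : X} {v : V}
    (hv : v ∈ U x) : averagedFamily ρ q x v = v := by
  have hterm (g : G) : ρ g (q (g⁻¹ • x) (ρ g⁻¹ v)) = v := by
    rw [hq _ _ (hU g⁻¹ x hv), Representation.self_inv_apply]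
  simp only [averagedFamily_apply, hterm, Finset.sum_const, Finset.card_univ,
    ← Nat.cast_smul_eq_nsmul F, smul_smul, inv_mul_cancel₀ hG, one_smul]

lemma averagedFamily_smul_apply (g : G) (x : X) (v : V) :
    averagedFamily ρ q (g • x) (ρ g v) = ρ g (averagedFamily ρ q x v) := by
  rw [averagedFamily_apply, averagedFamily_apply, map_smul, map_sum]
  congr 1
  refine Fintype.sum_equiv (Equiv.mulLeft g⁻¹) _ _ fun k => ?_
  simp [mul_smul, map_mul]

theorem exists_equivariantFamily_compl (hG : (Fintype.card G : F) ≠ 0)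
    {U T : X → Submodule F V} (hUT : ∀ x, U x ≤ T x) (hU : EquivariantFamily ρ U)
    (hT : EquivariantFamily ρ T) :
    ∃ W : X → Submodule F V, EquivariantFamily ρ W ∧
      ∀ x, W x ≤ T x ∧ Disjoint (W x) (U x) ∧ T x ≤ W x ⊔ U x := by
  choose r hr using fun x => (U x).subtype.exists_leftInverse_of_injective (U x).ker_subtype
  have hq (x : X) (u : V) (hu : u ∈ U x) : (U x).subtype (r x u) = u := by
    simpa using congr_arg (U x).subtype (LinearMap.congr_fun (hr x) ⟨u, hu⟩)
  set Q := averagedFamily ρ fun x => (U x).subtype ∘ₗ r x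
  have hQmem : ∀ x v, Q x v ∈ U x := averagedFamily_mem hU fun x v => (r x v).2
  have hQid : ∀ x, ∀ v ∈ U x, Q x v = v := fun x v hv =>
    averagedFamily_apply_of_mem hG hU hq hv
  refine ⟨fun x => T x ⊓ LinearMap.ker (Q x), fun g x v hv => ⟨hT g x hv.1, ?_⟩,
    fun x => ⟨inf_le_left, ?_, fun v hv => ?_⟩⟩
  · simp [Q, averagedFamily_smul_apply, LinearMap.mem_ker.mp hv.2]
  · refine disjoint_def.mpr fun v hv hvU => ?_
    rw [← hQid x v hvU]
    exact hv.2
  · refine mem_sup.mpr ⟨v - Q x v, ⟨sub_mem hv (hUT x (hQmem x v)), ?_⟩, Q x v, hQmem x v,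
      sub_add_cancel v _⟩
    simp [hQid x _ (hQmem x v)]

end Averaging

section Quotient

variable {F V : Type*} [Field F] [AddCommGroup V] [Module F V]

lemma bijective_mkQ_comp_inclusion {W U T : Submodule F V} (hWT : W ≤ T)
    (hdisj : Disjoint W U) (hT : T ≤ W ⊔ U) :
    Function.Bijective ((U.comap T.subtype).mkQ ∘ₗ inclusion hWT) := by
  refine ⟨LinearMap.ker_eq_bot.mp (eq_bot_iff.mpr fun w hw => ?_), fun t => ?_⟩
  · have hwU : (w : V) ∈ U := (Quotient.mk_eq_zero (U.comap T.subtype)).mp hw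
    exact (mem_bot F).mpr (Subtype.ext (disjoint_def.mp hdisj _ w.2 hwU))
  · obtain ⟨t, rfl⟩ := mkQ_surjective _ t
    obtain ⟨w, hw, u, hu, hwu⟩ := mem_sup.mp (hT t.2)
    refine ⟨⟨w, hw⟩, (Submodule.Quotient.eq _).mpr ?_⟩
    simpa [← hwu] using neg_mem hu

end Quotient

section Filtration

variable {F V P : Type*} [Field F] [AddCommGroup V] [Module F V] [PartialOrder P]
  {filt : P → Submodule F V}

lemma filtGT_le (hanti : Antitone filt) (x : P) : filtGT filt x ≤ filt x :=
  iSup₂_le fun _ hy => hanti (le_of_lt hy)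

lemma equivariantFamily_filtGT {G : Type*} [Group G] [MulAction G P] {ρ : Representation F G V}
    (hmono : ∀ g : G, Monotone (fun x : P => g • x)) (hfilt : EquivariantFamily ρ filt) :
    EquivariantFamily ρ (filtGT filt) := fun g x =>
  iSup₂_le fun y (hy : x < y) => (hfilt g y).trans <| comap_mono <|
    le_iSup₂_of_le (f := fun z (_ : z ∈ {z | g • x < z}) => filt z) (g • y)
      ((hmono g).strictMono_of_injective (MulAction.injective g) hy) le_rfl

lemma le_iSup_of_le_sup_filtGT [Finite P] {W : P → Submodule F V}
    (hW : ∀ x, filt x ≤ W x ⊔ filtGT filt x) (x : P) : filt x ≤ ⨆ y, W y := by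
  induction x using WellFoundedGT.induction with
  | _ x ih => exact (hW x).trans (sup_le (le_iSup W x) (iSup₂_le fun y hy => ih y hy))

end Filtration

section Sum

variable {F V ι : Type*} [Field F] [AddCommGroup V] [Module F V] [Fintype ι]

noncomputable def sumFamily (W : ι → Submodule F V) : (∀ i, W i) →ₗ[F] V :=
  ∑ i, (W i).subtype ∘ₗ LinearMap.proj i

lemma sumFamily_apply (W : ι → Submodule F V) (f : ∀ i, W i) :
    sumFamily W f = ∑ i, (f i : V) := by
  simp [sumFamily, LinearMap.sum_apply]

lemma bijective_sumFamily [FiniteDimensional F V] {W : ι → Submodule F V}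
    (htop : ⨆ i, W i = ⊤) (hdim : Module.finrank F V = ∑ i, Module.finrank F (W i)) :
    Function.Bijective (sumFamily W) := by
  have hsurj : Function.Surjective (sumFamily W) := by
    classical
    refine LinearMap.range_eq_top.mp (eq_top_iff.mpr (htop ▸ iSup_le fun i w hw => ?_))
    refine ⟨Pi.single i ⟨w, hw⟩, ?_⟩
    rw [sumFamily_apply, Fintype.sum_eq_single i fun j hj => by simp [Pi.single_eq_of_ne hj]]
    simp
  have hrank : Module.finrank F (∀ i, W i) = Module.finrank F V := by
    rw [Module.finrank_pi_fintype, hdim]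
  exact ⟨(LinearMap.injective_iff_surjective_of_finrank_eq_finrank hrank).mpr hsurj, hsurj⟩

end Sum

section EquivariantSum

variable {F V X G : Type*} [Field F] [AddCommGroup V] [Module F V] [Fintype X] [Group G]
  [MulAction G X] {ρ : Representation F G V} {W : X → Submodule F V}

def smulSection (hW : EquivariantFamily ρ W) (g : G) (f : ∀ x, W x) : ∀ x, W x :=
  fun x => ⟨ρ g (f (g⁻¹ • x)), by simpa using hW g _ (f (g⁻¹ • x)).2⟩

lemma sumFamily_smulSection (hW : EquivariantFamily ρ W) (g : G) (f : ∀ x, W x) :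
    sumFamily W (smulSection hW g f) = ρ g (sumFamily W f) := by
  rw [sumFamily_apply, sumFamily_apply, map_sum]
  exact Fintype.sum_equiv (MulAction.toPerm g⁻¹) _ _ fun x => rfl

lemma ofBijective_sumFamily_symm_apply (hW : EquivariantFamily ρ W)
    (h : Function.Bijective (sumFamily W)) (g : G) (v : V) :
    (LinearEquiv.ofBijective _ h).symm (ρ g v) =
      smulSection hW g ((LinearEquiv.ofBijective _ h).symm v) := by
  rw [LinearEquiv.symm_apply_eq, LinearEquiv.ofBijective_apply, sumFamily_smulSection]
  exact congr_arg (ρ g) ((LinearEquiv.ofBijective _ h).apply_symm_apply v).symm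

end EquivariantSum

/-- The right-hand side `⊕_{[x] ∈ P/G} Ind_{G_x}^G V_{=x}` is modelled by `Π x : P, V_{=x}`,
on which `g` sends the component at `x` to the component at `g • x` via `τ g x`. -/
theorem P_filtration_equivariant_decomposition
    {F V P G : Type*} [Field F] [AddCommGroup V] [Module F V]
    [FiniteDimensional F V] [Fintype P] [PartialOrder P] [OrderBot P]
    [Group G] [Fintype G] [MulAction G P]
    (hord : ∀ g : G, Monotone (fun x : P => g • x))
    (ρ : Representation F G V)
    (hG : (Fintype.card G : F) ≠ 0)
    (filt : P → Submodule F V)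
    (hanti : ∀ x y : P, x ≤ y → filt y ≤ filt x)
    (hbot : filt ⊥ = ⊤)
    (hequiv : ∀ (g : G) (x : P), (filt x).map (ρ g) = filt (g • x))
    (hdim : Module.finrank F V = ∑ x : P, Module.finrank F (filtEq filt x))
    -- the maps induced by `ρ g` on the subquotients `V_{=x} → V_{=g•x}` :
    (τ : ∀ (g : G) (x : P), filtEq filt x →ₗ[F] filtEq filt (g • x))
    (hτ : ∀ (g : G) (x : P) (v : filt x) (w : filt (g • x)),
      (w : V) = ρ g (v : V) →
      τ g x (Submodule.Quotient.mk v) = Submodule.Quotient.mk w) :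
    ∃ e : V ≃ₗ[F] (∀ x : P, filtEq filt x),
      ∀ (g : G) (v : V) (x : P), e (ρ g v) (g • x) = τ g x (e v x) := by
  have hfilt : EquivariantFamily ρ filt := fun g x => map_le_iff_le_comap.mp (hequiv g x).le
  obtain ⟨W, hW, hWcompl⟩ := exists_equivariantFamily_compl hG (filtGT_le hanti)
    (equivariantFamily_filtGT hord hfilt) hfilt
  choose hWle hdisj hsup using hWcompl
  let m x := LinearEquiv.ofBijective _ (bijective_mkQ_comp_inclusion (hWle x) (hdisj x) (hsup x))
  have htop : ⨆ x, W x = ⊤ := eq_top_iff.mpr (hbot ▸ le_iSup_of_le_sup_filtGT hsup ⊥)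
  have hdimW : Module.finrank F V = ∑ x, Module.finrank F (W x) :=
    hdim.trans (Finset.sum_congr rfl fun x _ => (m x).finrank_eq.symm)
  let S := LinearEquiv.ofBijective _ (bijective_sumFamily htop hdimW)
  refine ⟨S.symm.trans (LinearEquiv.piCongrRight m), fun g v x => ?_⟩
  simp only [LinearEquiv.trans_apply, LinearEquiv.piCongrRight_apply, S,
    ofBijective_sumFamily_symm_apply hW]
  set f := S.symm v
  have hfx : (f x : V) ∈ filt x := hWle x (f x).2
  rw [show m x (f x) = Submodule.Quotient.mk ⟨f x, hfx⟩ from rfl,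
    hτ g x ⟨f x, hfx⟩ ⟨ρ g (f x), hfilt g x hfx⟩ rfl]
  exact congr_arg Submodule.Quotient.mk
    (Subtype.ext (congr_arg (fun y => ρ g (f y : V)) (inv_smul_smul g x)))
end

section
/- Let M be a conditional oriented matroid on I, F a flat, and B ⊆ F a nonbasic set with closure F (minimal flat containing it), where some proper subset B' ⊊ B satisfies B̄' = F. Then for every covector X ∈ M, the polynomial ∏_{c∈C} z_c − ∏_{b∈B} z_b vanishes at the point z_X, where C ⊆ F has closure F and B ⊊ C is basic for F; that is, ∏_{c∈C} z_c − ∏_{b∈B} z_b lies in the vanishing ideal I(Z_M); hence its top-degree component ∏_{c∈C} z_c lies in gr I(Z_M). -/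
/-- The composition `X ∘ Y` of signed subsets of `I`. -/
def scomp {I : Type*} (X Y : I → SignType) : I → SignType :=
  fun i => if X i ≠ 0 then X i else Y i

/-- The separating set of two signed subsets. -/
def sepSet {I : Type*} (X Y : I → SignType) : Set I :=
  {i | X i = -(Y i) ∧ X i ≠ 0}

/-- A conditional oriented matroid on the ground set `I`. -/
structure IsCOM {I : Type*} (M : Set (I → SignType)) : Prop where
  faceSym : ∀ X ∈ M, ∀ Y ∈ M, scomp X (-Y) ∈ M
  strongElim : ∀ X ∈ M, ∀ Y ∈ M, ∀ i ∈ sepSet X Y,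
    ∃ Z ∈ M, Z i = 0 ∧ ∀ j ∉ sepSet X Y, Z j = scomp X Y j

/-- The flat (zero set) of a covector. -/
def sflat {I : Type*} (X : I → SignType) : Set I := {i | X i = 0}

/-- The collection of flats of a conditional oriented matroid. -/
def flats {I : Type*} (M : Set (I → SignType)) : Set (Set I) :=
  {F | ∃ X ∈ M, sflat X = F}

/-- `F` is the minimal flat of `M` containing `C` (the closure `C̄` of `C`). -/
def minimalFlatOf {I : Type*} (M : Set (I → SignType)) (C F : Set I) : Prop :=
  F ∈ flats M ∧ C ⊆ F ∧ ∀ F' ∈ flats M, C ⊆ F' → F ⊆ F'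

/-- `B` is basic for the flat `F`: the closure of `B` is `F` and no proper
subset of `B` has closure `F`. -/
def IsBasic {I : Type*} (M : Set (I → SignType)) (B : Finset I) (F : Set I) : Prop :=
  minimalFlatOf M (B : Set I) F ∧
    ∀ B' ⊆ B, minimalFlatOf M (B' : Set I) F → B' = B

/-- The 0/1 point `z_X ∈ K^{I × {+,-,0}}` attached to a covector `X`. -/
def bigPoint (K : Type*) [Field K] {I : Type*} (X : I → SignType) :
    I × SignType → K :=
  fun p => if X p.1 = p.2 then 1 else 0

/-- The big locus `Z_M ⊆ K^{I × {+,-,0}}` of a conditional oriented matroid. -/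
def bigLocus (K : Type*) [Field K] {I : Type*} (M : Set (I → SignType)) :
    Set (I × SignType → K) :=
  (fun X => bigPoint K X) '' M

/-- The vanishing ideal of a set of points of `K^σ`. -/
noncomputable def vanishingIdeal (K : Type*) [Field K] {σ : Type*} (Z : Set (σ → K)) :
    Ideal (MvPolynomial σ K) :=
  ⨅ z ∈ Z, RingHom.ker (MvPolynomial.eval z)

/-- The associated graded ideal `gr I(Z)`, generated by the top-degree
homogeneous components of the nonzero elements of `I(Z)`. -/
noncomputable def grIdeal (K : Type*) [Field K] {σ : Type*} (Z : Set (σ → K)) :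
    Ideal (MvPolynomial σ K) :=
  Ideal.span {g | ∃ f ∈ vanishingIdeal K Z, f ≠ 0 ∧
    g = MvPolynomial.homogeneousComponent f.totalDegree f}

/-!
On the big locus, the monomial `∏_{c∈C} z_c` is the indicator of the covectors whose flat contains
`C`. A flat contains `C` iff it contains `B`: one direction because `B ⊆ C`, the other because a
flat containing `B` contains its closure `F ⊇ C`. So the two monomials agree on `Z_M`, and since
`|B| < |C|` the top-degree component of their difference is `∏_{c∈C} z_c`.
-/

lemma mem_vanishingIdeal_iff {K σ : Type*} [Field K] {Z : Set (σ → K)}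
    {f : MvPolynomial σ K} :
    f ∈ vanishingIdeal K Z ↔ ∀ z ∈ Z, MvPolynomial.eval z f = 0 := by
  simp only [vanishingIdeal, Ideal.mem_iInf, RingHom.mem_ker]

lemma sub_mem_vanishingIdeal_iff {K σ : Type*} [Field K] {Z : Set (σ → K)}
    {p q : MvPolynomial σ K} :
    p - q ∈ vanishingIdeal K Z ↔ ∀ z ∈ Z, MvPolynomial.eval z p = MvPolynomial.eval z q := by
  simp only [mem_vanishingIdeal_iff, map_sub, sub_eq_zero]

lemma mem_grIdeal_of_sub_mem_vanishingIdeal {K σ : Type*} [Field K] {Z : Set (σ → K)}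
    {p q : MvPolynomial σ K} {n : ℕ} (hp : p.IsHomogeneous n) (hp0 : p ≠ 0)
    (hq : q.totalDegree < n) (hpq : p - q ∈ vanishingIdeal K Z) :
    p ∈ grIdeal K Z := by
  have hdeg : (p - q).totalDegree = n := by
    rw [sub_eq_add_neg, MvPolynomial.totalDegree_add_eq_left_of_totalDegree_lt,
      hp.totalDegree hp0]
    rwa [MvPolynomial.totalDegree_neg, hp.totalDegree hp0]
  refine Ideal.subset_span ⟨p - q, hpq, fun h => ?_, ?_⟩
  · rw [h, MvPolynomial.totalDegree_zero] at hdeg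
    omega
  · rw [hdeg, map_sub, MvPolynomial.homogeneousComponent_eq_self hp,
      MvPolynomial.homogeneousComponent_eq_zero _ _ hq, sub_zero]

namespace MvPolynomial

lemma isHomogeneous_prod_X {R σ ι : Type*} [CommSemiring R] (s : Finset ι) (f : ι → σ) :
    (∏ i ∈ s, X (f i) : MvPolynomial σ R).IsHomogeneous s.card := by
  simpa using
    IsHomogeneous.prod s (fun i => X (f i)) (fun _ => 1) fun i _ => isHomogeneous_X R (f i)

lemma prod_X_ne_zero {R σ ι : Type*} [CommRing R] [IsDomain R] (s : Finset ι) (f : ι → σ) :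
    (∏ i ∈ s, X (f i) : MvPolynomial σ R) ≠ 0 :=
  Finset.prod_ne_zero_iff.2 fun i _ => X_ne_zero (f i)

end MvPolynomial

lemma eval_bigPoint_prod_X_zero (K : Type*) [Field K] {I : Type*} (X : I → SignType)
    (S : Finset I) :
    MvPolynomial.eval (bigPoint K X) (∏ c ∈ S, MvPolynomial.X (c, (0 : SignType)))
      = if ∀ c ∈ S, X c = 0 then 1 else 0 := by
  simp only [map_prod, MvPolynomial.eval_X, bigPoint, Finset.prod_ite_zero, Finset.prod_const_one]

lemma subset_sflat_of_minimalFlatOf {I : Type*} {M : Set (I → SignType)} {B C F : Set I}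
    (hB : minimalFlatOf M B F) (hCF : C ⊆ F) {X : I → SignType} (hX : X ∈ M)
    (hBX : B ⊆ sflat X) : C ⊆ sflat X :=
  hCF.trans (hB.2.2 _ ⟨X, hX, rfl⟩ hBX)

theorem nonbasic_product_in_gr_general (K : Type*) [Field K] {I : Type*}
    {M : Set (I → SignType)}
    (C B : Finset I) (F : Set I)
    (hC : minimalFlatOf M (C : Set I) F)
    (hBC : B ⊂ C) (hB : IsBasic M B F) :
    ((∏ c ∈ C, MvPolynomial.X (c, (0 : SignType)))
        - (∏ b ∈ B, MvPolynomial.X (b, (0 : SignType)))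
      ∈ vanishingIdeal K (bigLocus K M)) ∧
    (∏ c ∈ C, MvPolynomial.X (c, (0 : SignType)) : MvPolynomial (I × SignType) K)
      ∈ grIdeal K (bigLocus K M) := by
  have hflat : ∀ X ∈ M, (∀ c ∈ C, X c = 0) ↔ (∀ b ∈ B, X b = 0) := fun X hX =>
    ⟨(Finset.coe_subset.2 hBC.1).trans, subset_sflat_of_minimalFlatOf hB.1 hC.2.1 hX⟩
  have hvan : (∏ c ∈ C, MvPolynomial.X (c, (0 : SignType)))
      - (∏ b ∈ B, MvPolynomial.X (b, (0 : SignType))) ∈ vanishingIdeal K (bigLocus K M) := by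
    refine sub_mem_vanishingIdeal_iff.2 ?_
    rintro _ ⟨X, hX, rfl⟩
    simp only [eval_bigPoint_prod_X_zero, hflat X hX]
  refine ⟨hvan, mem_grIdeal_of_sub_mem_vanishingIdeal
    (MvPolynomial.isHomogeneous_prod_X C _) (MvPolynomial.prod_X_ne_zero C _) ?_ hvan⟩
  exact (MvPolynomial.isHomogeneous_prod_X B _).totalDegree_le.trans_lt (Finset.card_lt_card hBC)

/-- let `F` be the closure of a set `C`, and let `B ⊊ C` be basic
for `F` (so `C` is nonbasic).  Then `∏_{c∈C} z_c − ∏_{b∈B} z_b` vanishes on the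
big locus, i.e. lies in `I(Z_M)`; hence its top-degree component `∏_{c∈C} z_c`
lies in `gr I(Z_M)`. -/
theorem nonbasic_product_in_gr (K : Type*) [Field K] {I : Type*}
    {M : Set (I → SignType)} (hM : IsCOM M)
    (C B : Finset I) (F : Set I)
    (hC : minimalFlatOf M (C : Set I) F)
    (hBC : B ⊂ C) (hB : IsBasic M B F) :
    ((∏ c ∈ C, MvPolynomial.X (c, (0 : SignType)))
        - (∏ b ∈ B, MvPolynomial.X (b, (0 : SignType)))
      ∈ vanishingIdeal K (bigLocus K M)) ∧
    (∏ c ∈ C, MvPolynomial.X (c, (0 : SignType)) : MvPolynomial (I × SignType) K)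
      ∈ grIdeal K (bigLocus K M) :=
  nonbasic_product_in_gr_general K C B F hC hBC hB
end

section
/- Let M be a conditional oriented matroid on I. For every flat F of M there exists at least one basic set for F, and any two basic sets for F have the same cardinality. Moreover, if F' ⊆ F are flats, there exist basic sets B' for F' and B for F with B' ⊆ B. -/
/-! The closure `cl C = flatClosure M C` is the intersection of all flats containing `C`; a set is
basic for `F` exactly when it is independent for this closure and has closure `F`. Inside a flat
`F` the closure satisfies the Steinitz exchange property: if `a ∈ cl (C ∪ {b}) \ cl C`, a covector
`Y` vanishing on `C` but not at `a` and a covector `Z` vanishing on `C ∪ {a}` but not at `b` can be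
arranged, after reorienting `Z` on `F` by face symmetry, to have opposite signs at `b`; strong
elimination at `b` then produces a covector vanishing on `C ∪ {b}` but not at `a`. The usual matroid
arguments follow: Steinitz exchange bounds independent sets by spanning sets, and a maximal
independent subset of `F` containing a basic set of `F' ⊆ F` is basic for `F`. -/

section

variable {I : Type*} {M : Set (I → SignType)}

def flatClosure (M : Set (I → SignType)) (C : Set I) : Set I :=
  {i | ∀ Z ∈ M, (∀ c ∈ C, Z c = 0) → Z i = 0}

def FlatIndep (M : Set (I → SignType)) (B : Set I) : Prop :=
  ∀ b ∈ B, b ∉ flatClosure M (B \ {b})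

section Closure

variable {C D F : Set I}

lemma subset_flatClosure (M : Set (I → SignType)) (C : Set I) : C ⊆ flatClosure M C :=
  fun _ hi _ _ hZ => hZ _ hi

lemma flatClosure_mono (h : C ⊆ D) : flatClosure M C ⊆ flatClosure M D :=
  fun _ hi Z hZ hv => hi Z hZ fun c hc => hv c (h hc)

lemma flatClosure_subset_flatClosure (h : C ⊆ flatClosure M D) :
    flatClosure M C ⊆ flatClosure M D :=
  fun _ hi Z hZ hv => hi Z hZ fun _ hc => h hc Z hZ hv

lemma flatClosure_subset_of_mem_flats (hF : F ∈ flats M) (hC : C ⊆ F) : flatClosure M C ⊆ F := by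
  obtain ⟨X, hX, rfl⟩ := hF
  exact fun _ hi => hi X hX hC

lemma minimalFlatOf_iff : minimalFlatOf M C F ↔ F ∈ flats M ∧ flatClosure M C = F := by
  refine ⟨fun ⟨hF, hCF, hmin⟩ => ⟨hF, ?_⟩, ?_⟩
  · refine (flatClosure_subset_of_mem_flats hF hCF).antisymm fun i hi Z hZ hv => ?_
    exact hmin (sflat Z) ⟨Z, hZ, rfl⟩ hv hi
  · rintro ⟨hF, rfl⟩
    refine ⟨hF, subset_flatClosure M C, ?_⟩
    rintro _ ⟨Z, hZ, rfl⟩ hCZ i hi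
    exact hi Z hZ hCZ

end Closure

lemma FlatIndep.subset {B B' : Set I} (hB : FlatIndep M B) (h : B' ⊆ B) : FlatIndep M B' :=
  fun b hb hcl => hB b (h hb) (flatClosure_mono (Set.sdiff_subset_sdiff_left h) hcl)

lemma isBasic_iff {B : Finset I} {F : Set I} :
    IsBasic M B F ↔ minimalFlatOf M B F ∧ FlatIndep M B := by
  classical
  refine ⟨fun ⟨hBF, hmin⟩ => ⟨hBF, fun b hb hcl => ?_⟩, fun ⟨hBF, hind⟩ => ⟨hBF, ?_⟩⟩
  · rw [minimalFlatOf_iff] at hBF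
    have hspan : flatClosure M ↑(B.erase b) = F := by
      rw [← hBF.2, Finset.coe_erase]
      refine (flatClosure_mono Set.sdiff_subset).antisymm
        (flatClosure_subset_flatClosure fun x hx => ?_)
      by_cases hxb : x = b
      · exact hxb ▸ hcl
      · exact subset_flatClosure M _ ⟨hx, hxb⟩
    have := hmin _ (B.erase_subset b) (minimalFlatOf_iff.mpr ⟨hBF.1, hspan⟩)
    exact B.notMem_erase b (by rwa [this])
  · intro B' hB'B hB'F
    by_contra hne
    obtain ⟨b, hbB, hbB'⟩ := Finset.exists_of_ssubset (hB'B.lt_of_ne hne)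
    have hbF : b ∈ flatClosure M B' := (minimalFlatOf_iff.mp hB'F).2 ▸ hBF.2.1 hbB
    refine hind b hbB (flatClosure_mono (C := B') (D := ↑B \ {b}) (fun x hx => ⟨hB'B hx, ?_⟩) hbF)
    rintro rfl
    exact hbB' hx

lemma IsBasic.coe_subset {B : Finset I} {F : Set I} (hB : IsBasic M B F) : ↑B ⊆ F :=
  hB.1.2.1

lemma IsBasic.flatIndep {B : Finset I} {F : Set I} (hB : IsBasic M B F) : FlatIndep M B :=
  (isBasic_iff.mp hB).2

namespace IsCOM

variable {F : Set I}

lemma exists_neg_on_flat (hM : IsCOM M) (hF : F ∈ flats M) {Z : I → SignType} (hZ : Z ∈ M) :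
    ∃ Z' ∈ M, ∀ i ∈ F, Z' i = -Z i := by
  obtain ⟨X, hX, rfl⟩ := hF
  exact ⟨scomp X (-Z), hM.faceSym X hX Z hZ, fun i (hi : X i = 0) => by simp [scomp, hi]⟩

lemma flatClosure_exchange (hM : IsCOM M) (hF : F ∈ flats M) {C : Set I} {a b : I}
    (hC : C ⊆ F) (ha : a ∈ F) (hb : b ∈ F)
    (hab : a ∈ flatClosure M (insert b C) \ flatClosure M C) : b ∈ flatClosure M (insert a C) := by
  obtain ⟨Y, hY, hYC, hYa⟩ : ∃ Y ∈ M, (∀ c ∈ C, Y c = 0) ∧ Y a ≠ 0 := by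
    simpa [flatClosure] using hab.2
  have hvanish : ∀ W ∈ M, W b = 0 → (∀ c ∈ C, W c = 0) → W a = 0 :=
    fun W hW hWb hWC => hab.1 W hW (by simpa [hWb] using hWC)
  have hYb : Y b ≠ 0 := fun h => hYa (hvanish Y hY h hYC)
  have hno_opp : ∀ Z ∈ M, (∀ c ∈ C, Z c = 0) → Z a = 0 → Y b ≠ -Z b := by
    intro Z hZ hZC hZa hopp
    obtain ⟨W, hW, hWb, hWY⟩ := hM.strongElim Y hY Z hZ b ⟨hopp, hYb⟩
    have hoff : ∀ j, Z j = 0 → W j = Y j := fun j hj => by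
      rw [hWY j fun hsep => hsep.2 (by simpa [hj] using hsep.1)]
      by_cases hYj : Y j = 0 <;> simp [scomp, hYj, hj]
    exact hYa (hoff a hZa ▸ hvanish W hW hWb fun c hc => hoff c (hZC c hc) ▸ hYC c hc)
  intro Z hZ hv
  have hZC : ∀ c ∈ C, Z c = 0 := fun c hc => hv c (Or.inr hc)
  have hZa : Z a = 0 := hv a (Or.inl rfl)
  by_contra hZb
  by_cases hopp : Y b = -Z b
  · exact hno_opp Z hZ hZC hZa hopp
  obtain ⟨Z', hZ', hZ'F⟩ := hM.exists_neg_on_flat hF hZ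
  have hsame : Y b = Z b := by
    revert hYb hZb hopp
    cases Y b <;> cases Z b <;> decide
  refine hno_opp Z' hZ' (fun c hc => ?_) (by simp [hZ'F a ha, hZa]) (by simp [hZ'F b hb, hsame])
  simp [hZ'F c (hC hc), hZC c hc]

lemma flatIndep_insert (hM : IsCOM M) (hF : F ∈ flats M) {B : Set I} {x : I} (hBF : B ⊆ F)
    (hB : FlatIndep M B) (hxF : x ∈ F) (hxB : x ∉ flatClosure M B) : FlatIndep M (insert x B) := by
  have hxB' : x ∉ B := fun h => hxB (subset_flatClosure M B h)
  rintro y (rfl | hyB) hy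
  · exact hxB (by rwa [Set.insert_sdiff_self_of_notMem hxB'] at hy)
  · have hyx : y ≠ x := by rintro rfl; exact hxB' hyB
    rw [← Set.insert_sdiff_singleton_comm hyx.symm] at hy
    have := hM.flatClosure_exchange hF (Set.sdiff_subset.trans hBF) (hBF hyB) hxF ⟨hy, hB y hyB⟩
    exact hxB (by rwa [Set.insert_sdiff_singleton, Set.insert_eq_of_mem hyB] at this)

/-- Steinitz exchange: replace elements of `B \ S` one at a time by elements of `S`. -/
lemma card_le_card_of_subset_flatClosure (hM : IsCOM M) (hF : F ∈ flats M)
    {B S : Finset I} (hSF : ↑S ⊆ F) (hBF : ↑B ⊆ F) (hB : FlatIndep M B)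
    (hBS : ↑B ⊆ flatClosure M S) : B.card ≤ S.card := by
  classical
  induction hn : (B \ S).card generalizing B with
  | zero =>
    exact Finset.card_le_card (Finset.sdiff_eq_empty_iff_subset.mp (Finset.card_eq_zero.mp hn))
  | succ n ih =>
    obtain ⟨b, hbB, hbS⟩ : ∃ b ∈ B, b ∉ S := Finset.not_subset.mp fun h => by
      simp [Finset.sdiff_eq_empty_iff_subset.mpr h] at hn
    obtain ⟨s, hsS, hs⟩ : ∃ s ∈ S, s ∉ flatClosure M ↑(B.erase b) := by
      by_contra! h
      exact hB b hbB (by simpa using hBS.trans (flatClosure_subset_flatClosure h) hbB)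
    have hsB : s ∉ B.erase b := fun h => hs (subset_flatClosure M _ h)
    have hcard : (insert s (B.erase b)).card = B.card := by
      rw [Finset.card_insert_of_notMem hsB, Finset.card_erase_add_one hbB]
    have hEF : ↑(B.erase b) ⊆ F := (Finset.coe_subset.mpr (B.erase_subset b)).trans hBF
    rw [← hcard]
    refine ih ?_ ?_ ?_ ?_
    · rw [Finset.coe_insert, Set.insert_subset_iff]
      exact ⟨hSF hsS, hEF⟩
    · rw [Finset.coe_insert]
      exact hM.flatIndep_insert hF hEF (hB.subset (by simp)) (hSF hsS) hs
    · rw [Finset.coe_insert, Set.insert_subset_iff]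
      exact ⟨subset_flatClosure M _ hsS, (Finset.coe_subset.mpr (B.erase_subset b)).trans hBS⟩
    · rw [Finset.insert_sdiff_of_mem _ hsS, Finset.erase_sdiff_comm,
        Finset.card_erase_of_mem (Finset.mem_sdiff.mpr ⟨hbB, hbS⟩), hn, Nat.add_sub_cancel]

lemma exists_isBasic_superset [Finite I] (hM : IsCOM M) (hF : F ∈ flats M) {B₀ : Finset I}
    (hB₀F : ↑B₀ ⊆ F) (hB₀ : FlatIndep M B₀) : ∃ B : Finset I, IsBasic M B F ∧ B₀ ⊆ B := by
  classical
  obtain ⟨B, hB₀B, hmax⟩ :=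
    (Set.toFinite {B : Finset I | ↑B ⊆ F ∧ FlatIndep M B}).exists_le_maximal ⟨hB₀F, hB₀⟩
  obtain ⟨hBF, hB⟩ := hmax.prop
  refine ⟨B, isBasic_iff.mpr ⟨minimalFlatOf_iff.mpr ⟨hF, ?_⟩, hB⟩, hB₀B⟩
  refine (flatClosure_subset_of_mem_flats hF hBF).antisymm fun x hxF => ?_
  by_contra hx
  have hxB : x ∈ B := by
    refine hmax.2 ⟨?_, ?_⟩ (B.subset_insert x) (B.mem_insert_self x) <;> rw [Finset.coe_insert]
    · exact Set.insert_subset hxF hBF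
    · exact hM.flatIndep_insert hF hBF hB hxF hx
  exact hx (subset_flatClosure M B hxB)

lemma exists_isBasic [Finite I] (hM : IsCOM M) (hF : F ∈ flats M) : ∃ B : Finset I, IsBasic M B F :=
  (hM.exists_isBasic_superset hF (B₀ := ∅) (by simp) (by simp [FlatIndep])).imp fun _ => And.left

lemma card_le_card_of_isBasic (hM : IsCOM M) {B B' : Finset I} (hB : IsBasic M B F)
    (hB' : IsBasic M B' F) : B.card ≤ B'.card := by
  obtain ⟨hF, hB'F⟩ := minimalFlatOf_iff.mp hB'.1
  exact hM.card_le_card_of_subset_flatClosure hF hB'.coe_subset hB.coe_subset hB.flatIndep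
    (hB'F ▸ hB.coe_subset)

end IsCOM

end

/-- every flat `F` of a conditional oriented matroid on a finite
ground set has at least one basic set, any two basic sets for `F` have the same
cardinality, and for nested flats `F' ⊆ F` there exist nested basic sets
`B' ⊆ B`. -/
theorem basic_sets_exist_card_nested {I : Type*} [Fintype I]
    {M : Set (I → SignType)} (hM : IsCOM M) :
    (∀ F ∈ flats M,
      (∃ B : Finset I, IsBasic M B F) ∧
      ∀ B B' : Finset I, IsBasic M B F → IsBasic M B' F → B.card = B'.card) ∧
    (∀ F' ∈ flats M, ∀ F ∈ flats M, F' ⊆ F →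
      ∃ B' B : Finset I, IsBasic M B' F' ∧ IsBasic M B F ∧ B' ⊆ B) := by
  refine ⟨fun F hF => ⟨hM.exists_isBasic hF, fun B B' hB hB' => ?_⟩, fun F' hF' F hF hF'F => ?_⟩
  · exact (hM.card_le_card_of_isBasic hB hB').antisymm (hM.card_le_card_of_isBasic hB' hB)
  · obtain ⟨B', hB'⟩ := hM.exists_isBasic hF'
    obtain ⟨B, hB, hB'B⟩ := hM.exists_isBasic_superset hF (hB'.coe_subset.trans hF'F) hB'.flatIndep
    exact ⟨B', B, hB', hB, hB'B⟩
end

section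
/- Let M be a conditional oriented matroid on I = [n] with the all-plus signed set X = (+,...,+) a symmetric circuit (so both X and −X are circuits), and suppose 0 < m < n. Define ỹ_i on covectors Y by ỹ_i(Y) = 1 if Y(i) ∈ {+,0} for i ≤ m, ỹ_i(Y) = 1 if Y(i) = + for i > m, and ỹ_i(Y) = 0 otherwise. Then for every covector Y ∈ M, ỹ_i(Y) is not identically 1 over all i, and not identically 0 over all i; i.e., there exist i₀, i₁ ∈ [n] with ỹ_{i₀}(Y) = 0 and ỹ_{i₁}(Y) = 1. -/
/-- `X` is a circuit of the conditional oriented matroid `M`: `X ∘ Y ≠ Y` for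
all covectors `Y`, and every proper signed subset `Z` of `X` satisfies
`Z ∘ Y₀ = Y₀` for some covector `Y₀`. -/
def IsCircuit {I : Type*} (M : Set (I → SignType)) (X : I → SignType) : Prop :=
  (∀ Y ∈ M, scomp X Y ≠ Y) ∧
  (∀ Z : I → SignType, (∀ i, Z i = 0 ∨ Z i = X i) → Z ≠ X →
    ∃ Y₀ ∈ M, scomp Z Y₀ = Y₀)

/-- The function `ỹ_i` of Lemma 4.4 for the all-plus circuit, with `J = [m]`:
`ỹ_i(Y) = 1` iff `Y(i) ∈ {+,0}` for `i ∈ J`, and iff `Y(i) = +` for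
`i ∉ J`. -/
def tildeY (K : Type*) [Field K] {n : ℕ} (m : ℕ) (Y : Fin n → SignType)
    (i : Fin n) : K :=
  if (i.val < m ∧ (Y i = 1 ∨ Y i = 0)) ∨ (¬ i.val < m ∧ Y i = 1) then 1 else 0

/-!
If every `ỹ_i(Y)` is `1`, then `Y` is a signed subset of the all-plus circuit with `Y(m+1) = +`;
if every `ỹ_i(Y)` is `0`, then `Y` is a signed subset of the all-minus circuit with `Y(1) = -`.
Neither can happen: for a nonzero covector `Y` inside a circuit `X`, the part of `X` off the
support of `Y` is a proper signed subset, absorbed by some covector `Y₀`, and then the covector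
`Y ∘ Y₀` agrees with `X` on the support of `X`, i.e. `X ∘ (Y ∘ Y₀) = Y ∘ Y₀`.
-/

section Circuit

variable {I : Type*}

def IsSignedSubset (Z X : I → SignType) : Prop :=
  ∀ i, Z i = 0 ∨ Z i = X i

lemma isSignedSubset_const_iff {Z : I → SignType} {s : SignType} (hs : s ≠ 0) :
    IsSignedSubset Z (fun _ => s) ↔ ∀ i, Z i ≠ -s := by
  refine forall_congr' fun i => ?_
  cases hZ : Z i <;> cases s <;> simp_all

lemma IsCOM.scomp_mem {M : Set (I → SignType)} (hM : IsCOM M) {X Y : I → SignType}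
    (hX : X ∈ M) (hY : Y ∈ M) : scomp X Y ∈ M := by
  have h : scomp X (-scomp X (-Y)) = scomp X Y := by
    funext i
    by_cases hi : X i = 0 <;> simp [scomp, hi]
  exact h ▸ hM.faceSym X hX _ (hM.faceSym X hX Y hY)

lemma IsCircuit.eq_zero_of_isSignedSubset {M : Set (I → SignType)} (hM : IsCOM M)
    {X : I → SignType} (hX : IsCircuit M X) {Y : I → SignType} (hY : Y ∈ M)
    (hYX : IsSignedSubset Y X) : Y = 0 := by
  by_contra hY0
  obtain ⟨j, hj⟩ : ∃ j, Y j ≠ 0 := by simpa [funext_iff] using hY0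
  set Z : I → SignType := fun i => if Y i = 0 then X i else 0
  have hZX : IsSignedSubset Z X := fun i => by by_cases h : Y i = 0 <;> simp [Z, h]
  have hZne : Z ≠ X := fun h => hj <| by
    have hXj := congrFun h j
    simp only [Z, if_neg hj] at hXj
    simpa [← hXj] using hYX j
  obtain ⟨Y₀, hY₀, hZY₀⟩ := hX.2 Z hZX hZne
  have hcomp : scomp X (scomp Y Y₀) = scomp Y Y₀ := by
    funext i
    have hi := congrFun hZY₀ i
    rcases hYX i with h | h <;> by_cases hXi : X i = 0 <;> simp_all [scomp, Z]
  exact hX.1 _ (hM.scomp_mem hY hY₀) hcomp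

end Circuit

section tildeY

variable {K : Type*} [Field K] {n m : ℕ} {Y : Fin n → SignType} {i : Fin n}

lemma apply_ne_neg_one_of_tildeY_ne_zero (h : tildeY K m Y i ≠ 0) : Y i ≠ -1 := by
  intro hY
  simp [tildeY, hY] at h

lemma apply_eq_one_of_tildeY_ne_zero (h : tildeY K m Y i ≠ 0) (hi : m ≤ i.val) : Y i = 1 := by
  by_contra hY
  simp [tildeY, hY, hi.not_gt] at h

lemma apply_ne_one_of_tildeY_ne_one (h : tildeY K m Y i ≠ 1) : Y i ≠ 1 := by
  intro hY
  by_cases hi : i.val < m <;> simp [tildeY, hY, hi] at h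

lemma apply_eq_neg_one_of_tildeY_ne_one (h : tildeY K m Y i ≠ 1) (hi : i.val < m) :
    Y i = -1 := by
  cases hY : Y i <;> simp_all [tildeY]

end tildeY

/-- if the all-plus signed set on `[n]` is a symmetric circuit of
`M` and `0 < m < n`, then for every covector `Y ∈ M` the values `ỹ_i(Y)` are
neither identically `1` nor identically `0`: there are `i₀, i₁` with
`ỹ_{i₀}(Y) = 0` and `ỹ_{i₁}(Y) = 1`. -/
theorem two_values_attained (K : Type*) [Field K] {n : ℕ}
    {M : Set (Fin n → SignType)} (hM : IsCOM M)
    (hplus : IsCircuit M (fun _ => 1))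
    (hminus : IsCircuit M (fun _ => -1))
    {m : ℕ} (hm0 : 0 < m) (hmn : m < n) :
    ∀ Y ∈ M, (∃ i₀ : Fin n, tildeY K m Y i₀ = 0) ∧
      (∃ i₁ : Fin n, tildeY K m Y i₁ = 1) := by
  intro Y hY
  constructor
  · by_contra! h
    have hsub : IsSignedSubset Y (fun _ => 1) :=
      (isSignedSubset_const_iff one_ne_zero).2 fun i => apply_ne_neg_one_of_tildeY_ne_zero (h i)
    have hYm := apply_eq_one_of_tildeY_ne_zero (h ⟨m, hmn⟩) le_rfl
    simp [hplus.eq_zero_of_isSignedSubset hM hY hsub] at hYm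
  · by_contra! h
    have hsub : IsSignedSubset Y (fun _ => -1) :=
      (isSignedSubset_const_iff (by decide)).2 fun i => by
        simpa using apply_ne_one_of_tildeY_ne_one (h i)
    have hY0 := apply_eq_neg_one_of_tildeY_ne_one (h ⟨0, hm0.trans hmn⟩) hm0
    simp [hminus.eq_zero_of_isSignedSubset hM hY hsub] at hY0
end
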